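/- Every closed finite simple graph is weakly closed. -/

import Mathlib

/-!
Relabel the vertices by sorting first by connected component and then by the given closed
labeling. The new labeling is still closed, since closedness only compares vertices of one
component, and every component becomes an interval. In a closed labeling no inner vertex of a
shortest walk is a local extremum of the labels (closedness would give a chord), so from `x`
one can always step up to a neighbour whose label does not exceed that of a target `k` in the
same component. For an edge `{i, j}` and `i < k < j`, walk from `i` towards `k` in such steps:
closedness at the common smaller endpoint keeps every vertex reached adjacent to `j`.
-/

/-- `G` is closed with respect to the labeling `σ` of its vertices by `1, …, n`. -/
def ClosedWrt {V : Type*} {n : ℕ} (G : SimpleGraph V) (σ : V ≃ Fin n) : Prop :=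
  ∀ i j k l : V, G.Adj i j → G.Adj k l → σ i < σ j → σ k < σ l →
    (i = k → j ≠ l → G.Adj j l) ∧ (j = l → i ≠ k → G.Adj i k)

/-- `G` is weakly closed: some labeling of the vertices by `1, …, n` is such that for
every edge `{i, j}` with `i < j` and every `i < k < j`, `{i,k} ∈ E(G)` or `{k,j} ∈ E(G)`. -/
def WeaklyClosed {V : Type*} [Fintype V] (G : SimpleGraph V) : Prop :=
  ∃ σ : V ≃ Fin (Fintype.card V), ∀ i j k : V,
    G.Adj i j → σ i < σ k → σ k < σ j → G.Adj i k ∨ G.Adj k j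

namespace ClosedWrt

variable {V : Type*} {n : ℕ} {G : SimpleGraph V} {τ : V ≃ Fin n}

theorem rev (hc : ClosedWrt G τ) : ClosedWrt G (τ.trans Fin.revPerm) := by
  intro i j k l hij hkl hij' hkl'
  simp only [Equiv.trans_apply, Fin.revPerm_apply, Fin.rev_lt_rev] at hij' hkl'
  exact (hc j i l k hij.symm hkl.symm hij' hkl').symm

theorem lt_snd_of_minimal {x y : V} (p : G.Walk x y) (hp : ∀ q : G.Walk x y, p.length ≤ q.length)
    (hc : ClosedWrt G τ) (hxy : τ x < τ y) : τ x < τ p.snd ∧ τ p.snd ≤ τ y := by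
  induction p generalizing n with
  | nil => exact absurd hxy (lt_irrefl _)
  | @cons x v y hxv q ih =>
    simp only [SimpleGraph.Walk.snd_cons]
    have hq : ∀ q' : G.Walk v y, q.length ≤ q'.length := fun q' => by
      simpa using hp (.cons hxv q')
    cases q with
    | nil => exact ⟨hxy, le_rfl⟩
    | @cons _ v' _ hvv' q' =>
      have no_chord : x ≠ v' ∧ ¬ G.Adj x v' := by
        refine ⟨fun h => ?_, fun h => ?_⟩
        · subst h; simpa using hp q'
        · simpa using hp (.cons h q')
      rcases lt_trichotomy (τ v) (τ y) with hvy | hvy | hvy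
      · obtain ⟨hvv'_lt, -⟩ := ih hq hc hvy
        rw [SimpleGraph.Walk.snd_cons] at hvv'_lt
        refine ⟨(lt_or_gt_of_ne (τ.injective.ne hxv.ne)).resolve_right fun hvx => ?_, hvy.le⟩
        exact no_chord.2 ((hc v x v v' hxv.symm hvv' hvx hvv'_lt).1 rfl no_chord.1)
      · exact ⟨hxy.trans_eq hvy.symm, hvy.le⟩
      · have := ih hq hc.rev (by simpa using hvy)
        simp only [Equiv.trans_apply, Fin.revPerm_apply, Fin.rev_lt_rev, Fin.rev_le_rev,
          SimpleGraph.Walk.snd_cons] at this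
        exact absurd ((hc x v v' v hxv hvv'.symm (hxy.trans hvy) this.1).2 rfl
          no_chord.1) no_chord.2

theorem exists_adj_between (hc : ClosedWrt G τ) {x y : V} (hr : G.Reachable x y)
    (hxy : τ x < τ y) : ∃ z, G.Adj x z ∧ τ x < τ z ∧ τ z ≤ τ y := by
  obtain ⟨p, hp⟩ := hr.exists_walk_length_eq_dist
  have hmin : ∀ q : G.Walk x y, p.length ≤ q.length := fun q => hp ▸ SimpleGraph.dist_le q
  exact ⟨p.snd, p.adj_snd (SimpleGraph.Walk.not_nil_of_ne (ne_of_apply_ne τ hxy.ne)),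
    lt_snd_of_minimal p hmin hc hxy⟩

theorem adj_of_reachable_of_between (hc : ClosedWrt G τ) {x j k : V} (hxj : G.Adj x j)
    (hxk : τ x < τ k) (hkj : τ k < τ j) (hr : G.Reachable x k) : G.Adj k j := by
  obtain ⟨z, hxz, hxz_lt, hzk⟩ := hc.exists_adj_between hr hxk
  have hzj : G.Adj z j := (hc x z x j hxz hxj hxz_lt (hxk.trans hkj)).1 rfl
    (ne_of_apply_ne τ (hzk.trans_lt hkj).ne)
  rcases hzk.lt_or_eq with hzk | hzk
  · exact hc.adj_of_reachable_of_between hzj hzk hkj (hxz.reachable.symm.trans hr)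
  · rwa [τ.injective hzk] at hzj
termination_by (τ k : ℕ) - τ x
decreasing_by simp only [Fin.lt_def] at *; omega

end ClosedWrt

theorem exists_equiv_fin_lt_iff {V α : Type*} [Fintype V] [LinearOrder α] (f : V → α)
    (hf : Function.Injective f) :
    ∃ τ : V ≃ Fin (Fintype.card V), ∀ a b, τ a < τ b ↔ f a < f b := by
  let := LinearOrder.lift' f hf
  exact ⟨(monoEquivOfFin V rfl).symm.toEquiv, fun a b => (monoEquivOfFin V rfl).symm.lt_iff_lt⟩

theorem ClosedWrt.exists_reachable_convex {V : Type*} [Fintype V] {G : SimpleGraph V}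
    {σ : V ≃ Fin (Fintype.card V)} (hσ : ClosedWrt G σ) :
    ∃ τ : V ≃ Fin (Fintype.card V), ClosedWrt G τ ∧
      ∀ a b c, G.Reachable a b → τ a < τ c → τ c < τ b → G.Reachable a c := by
  let comp := Finite.equivFin G.ConnectedComponent
  let key : V → Fin _ ×ₗ Fin _ := fun v => toLex (comp (G.connectedComponentMk v), σ v)
  have hkey : Function.Injective key := fun a b h => σ.injective (congrArg (·.2) h)
  obtain ⟨τ, hτ⟩ := exists_equiv_fin_lt_iff key hkey
  have lt_iff_of_reachable {a b : V} (hab : G.Reachable a b) : τ a < τ b ↔ σ a < σ b := by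
    simp [hτ, key, Prod.Lex.toLex_lt_toLex', SimpleGraph.ConnectedComponent.sound hab]
  refine ⟨τ, fun i j k l hij hkl h₁ h₂ => ?_, fun a b c hab hac hcb => ?_⟩
  · exact hσ i j k l hij hkl ((lt_iff_of_reachable hij.reachable).1 h₁)
      ((lt_iff_of_reachable hkl.reachable).1 h₂)
  · simp only [hτ, key, Prod.Lex.toLex_lt_toLex'] at hac hcb
    rw [← SimpleGraph.ConnectedComponent.eq, ← comp.injective.eq_iff]
    exact le_antisymm hac.1 (hcb.1.trans_eq (by rw [SimpleGraph.ConnectedComponent.sound hab]))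

theorem weaklyClosed_of_closed {V : Type*} [Fintype V] (G : SimpleGraph V)
    (h : ∃ σ : V ≃ Fin (Fintype.card V), ClosedWrt G σ) : WeaklyClosed G := by
  obtain ⟨σ, hσ⟩ := h
  obtain ⟨τ, hτ, hconvex⟩ := hσ.exists_reachable_convex
  exact ⟨τ, fun i j k hij hik hkj =>
    Or.inr (hτ.adj_of_reachable_of_between hij hik hkj (hconvex i j k hij.reachable hik hkj))⟩
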